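/- Fix α ∈ (0,1) and let c = c_{α/2} be the upper α/2 quantile of the standard normal distribution. Define Q(ρ) = 4 − 8Φ(c) + 2Φ_ρ(c,c) + 2Φ_{−ρ}(c,c) for ρ ∈ (−1,1), where Φ_ρ is the CDF of the standard bivariate normal with correlation ρ. Then Q is strictly increasing on (0,1): for 0 < ρ_1 < ρ_2 < 1 one has Q(ρ_1) < Q(ρ_2). -/

import Mathlib

/-!
Plackett's identity `∂_ρ Φ_ρ(x, y) = φ_ρ(x, y)`: the density `φ_ρ` solves the heat-type equation
`∂_ρ φ_ρ = ∂_u ∂_v φ_ρ`, so differentiating `Φ_ρ(x, y) = ∫_{u ≤ x} ∫_{v ≤ y} φ_ρ` in `ρ` and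
integrating the mixed derivative twice leaves `φ_ρ(x, y)`. Hence
`Q(ρ₂) - Q(ρ₁) = 2 ∫_{ρ₁}^{ρ₂} (φ_r(c, c) - φ_{-r}(c, c)) dr`, and since
`φ_r(c, c) = exp (-c² / (1 + r)) / (2π √(1 - r²))`, the integrand is positive for `0 < r < 1`
as soon as `c ≠ 0`, which is what `α < 1` guarantees (`Φ(0) = 1/2`).
-/

open MeasureTheory ProbabilityTheory

/-- The standard normal cumulative distribution function `Φ`. -/
noncomputable def stdCDF (x : ℝ) : ℝ :=
  ∫ t in Set.Iic x, (Real.sqrt (2 * Real.pi))⁻¹ * Real.exp (-t ^ 2 / 2)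

/-- The CDF `Φ_ρ(x, y)` of the standard bivariate normal distribution with correlation `ρ`. -/
noncomputable def bivCDF (ρ x y : ℝ) : ℝ :=
  ∫ u in Set.Iic x, ∫ v in Set.Iic y,
    (2 * Real.pi * Real.sqrt (1 - ρ ^ 2))⁻¹ *
      Real.exp (-(u ^ 2 - 2 * ρ * u * v + v ^ 2) / (2 * (1 - ρ ^ 2)))

open Real Set Filter Topology

noncomputable section

lemma integral_Iic_eq_of_hasDerivAt_of_integrableOn {E : Type*} [NormedAddCommGroup E]
    [NormedSpace ℝ E] [CompleteSpace E] {f f' : ℝ → E} {a : ℝ}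
    (hderiv : ∀ x ∈ Iic a, HasDerivAt f (f' x) x) (hf' : IntegrableOn f' (Iic a))
    (hf : IntegrableOn f (Iic a)) : ∫ x in Iic a, f' x = f a := by
  simpa using integral_Iic_of_hasDerivAt_of_tendsto' hderiv hf'
    (tendsto_zero_of_hasDerivAt_of_integrableOn_Iic hderiv hf' hf)

lemma integral_Iic_zero_of_even {f : ℝ → ℝ} (hf : Integrable f) (heven : ∀ x, f (-x) = f x) :
    ∫ x in Iic 0, f x = (∫ x, f x) / 2 := by
  have hsym : ∫ x in Ioi 0, f x = ∫ x in Iic 0, f x := by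
    rw [← neg_zero, ← integral_comp_neg_Iic, neg_zero]
    simp only [heven]
  have hsplit := integral_add_compl (measurableSet_Iic (a := 0)) hf
  rw [compl_Iic, hsym] at hsplit
  linarith

def bivPDF (ρ u v : ℝ) : ℝ :=
  (2 * π * √(1 - ρ ^ 2))⁻¹ * exp (-(u ^ 2 - 2 * ρ * u * v + v ^ 2) / (2 * (1 - ρ ^ 2)))

def bivPDFDerivFst (ρ u v : ℝ) : ℝ := bivPDF ρ u v * ((ρ * v - u) / (1 - ρ ^ 2))

-- Both `∂_ρ bivPDF` and `∂_v (∂_u bivPDF)`.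
def bivPDFDerivCorr (ρ u v : ℝ) : ℝ :=
  bivPDF ρ u v * (((ρ * u - v) * (ρ * v - u) + ρ * (1 - ρ ^ 2)) / (1 - ρ ^ 2) ^ 2)

section BivariateNormal

variable {m ρ : ℝ}

lemma one_sub_sq_pos_of_abs_lt_one (hρ : |ρ| < 1) : 0 < 1 - ρ ^ 2 :=
  sub_pos.2 ((sq_lt_one_iff_abs_lt_one ρ).2 hρ)

lemma bivPDF_pos (hρ : |ρ| < 1) (u v : ℝ) : 0 < bivPDF ρ u v := by
  have := one_sub_sq_pos_of_abs_lt_one hρ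
  unfold bivPDF
  positivity

lemma hasDerivAt_bivPDF_fst (u v : ℝ) :
    HasDerivAt (fun u => bivPDF ρ u v) (bivPDFDerivFst ρ u v) u := by
  have hq : HasDerivAt (fun u => -(u ^ 2 - 2 * ρ * u * v + v ^ 2) / (2 * (1 - ρ ^ 2)))
      (-(2 * u - 2 * ρ * v) / (2 * (1 - ρ ^ 2))) u :=
    ((((hasDerivAt_pow 2 u).sub (((hasDerivAt_id' u).const_mul (2 * ρ)).mul_const v)).add_const
      (v ^ 2)).neg.div_const _).congr_deriv (by norm_num)
  refine (hq.exp.const_mul (2 * π * √(1 - ρ ^ 2))⁻¹).congr_deriv ?_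
  unfold bivPDFDerivFst bivPDF
  generalize 1 - ρ ^ 2 = s
  ring

lemma hasDerivAt_bivPDFDerivFst_snd (u v : ℝ) :
    HasDerivAt (fun v => bivPDFDerivFst ρ u v) (bivPDFDerivCorr ρ u v) v := by
  have hq : HasDerivAt (fun v => -(u ^ 2 - 2 * ρ * u * v + v ^ 2) / (2 * (1 - ρ ^ 2)))
      (-(2 * v - 2 * ρ * u) / (2 * (1 - ρ ^ 2))) v :=
    ((((hasDerivAt_const v (u ^ 2)).sub ((hasDerivAt_const v (2 * ρ * u)).mul
      (hasDerivAt_id' v))).add (hasDerivAt_pow 2 v)).neg.div_const _).congr_deriv (by ring_nf)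
  have hl : HasDerivAt (fun v => (ρ * v - u) / (1 - ρ ^ 2)) (ρ / (1 - ρ ^ 2)) v :=
    ((((hasDerivAt_id' v).const_mul ρ).sub_const u).div_const _).congr_deriv (by ring)
  refine ((hq.exp.const_mul (2 * π * √(1 - ρ ^ 2))⁻¹).mul hl).congr_deriv ?_
  unfold bivPDFDerivCorr bivPDF
  generalize 1 - ρ ^ 2 = s
  -- at `s = 0` both sides vanish, since `x / 0 = 0`
  rcases eq_or_ne s 0 with rfl | hs
  · simp
  · field_simp
    ring

lemma hasDerivAt_bivPDF_corr (hρ : |ρ| < 1) (u v : ℝ) :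
    HasDerivAt (fun r => bivPDF r u v) (bivPDFDerivCorr ρ u v) ρ := by
  have hs := one_sub_sq_pos_of_abs_lt_one hρ
  have hsq : 0 < √(1 - ρ ^ 2) := sqrt_pos.2 hs
  have hd : HasDerivAt (fun r => 1 - r ^ 2) (-(2 * ρ)) ρ :=
    ((hasDerivAt_pow 2 ρ).const_sub 1).congr_deriv (by norm_num)
  have hk : HasDerivAt (fun r => (2 * π * √(1 - r ^ 2))⁻¹)
      ((2 * π * √(1 - ρ ^ 2))⁻¹ * (ρ / (1 - ρ ^ 2))) ρ := by
    refine ((((hasDerivAt_sqrt hs.ne').comp ρ hd).const_mul (2 * π)).inv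
      (by positivity)).congr_deriv ?_
    simp only [Function.comp_apply]
    field_simp
    rw [sq_sqrt hs.le]
  have hq : HasDerivAt (fun r => -(u ^ 2 - 2 * r * u * v + v ^ 2) / (2 * (1 - r ^ 2)))
      ((2 * u * v * (2 * (1 - ρ ^ 2)) - (u ^ 2 - 2 * ρ * u * v + v ^ 2) * (4 * ρ)) /
        (2 * (1 - ρ ^ 2)) ^ 2) ρ :=
    (((((hasDerivAt_const ρ (u ^ 2)).sub ((((hasDerivAt_const ρ 2).mul (hasDerivAt_id' ρ)).mul_const
      u).mul_const v)).add (hasDerivAt_const ρ (v ^ 2))).neg).div (hd.const_mul 2)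
        (by positivity)).congr_deriv (by norm_num; ring)
  refine (hk.mul hq.exp).congr_deriv ?_
  unfold bivPDFDerivCorr bivPDF
  field_simp
  ring

lemma continuous_bivPDF : Continuous (Function.uncurry (bivPDF ρ)) := by
  unfold Function.uncurry bivPDF
  fun_prop

lemma continuous_bivPDFDerivFst : Continuous (Function.uncurry (bivPDFDerivFst ρ)) := by
  unfold Function.uncurry bivPDFDerivFst bivPDF
  fun_prop

lemma continuous_bivPDFDerivCorr : Continuous (Function.uncurry (bivPDFDerivCorr ρ)) := by
  unfold Function.uncurry bivPDFDerivCorr bivPDF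
  fun_prop

-- Multiples of `gaussianEnvelope m u * gaussianEnvelope m v` dominate `bivPDF ρ` and its
-- derivatives uniformly in `|ρ| ≤ m < 1`; the factor `1 + 2 x²` absorbs their polynomial
-- prefactors.
def gaussianEnvelope (m x : ℝ) : ℝ := (1 + 2 * x ^ 2) * exp (-((1 - m) / 2) * x ^ 2)

lemma integrable_gaussianEnvelope (hm : m < 1) : Integrable (gaussianEnvelope m) := by
  have hτ : 0 < (1 - m) / 2 := by linarith
  have hsq : Integrable (fun x : ℝ => x ^ 2 * exp (-((1 - m) / 2) * x ^ 2)) := by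
    simpa using integrable_rpow_mul_exp_neg_mul_sq hτ (s := 2) (by norm_num)
  refine ((integrable_exp_neg_mul_sq hτ).add (hsq.const_mul 2)).congr (ae_of_all _ fun x => ?_)
  simp only [gaussianEnvelope, Pi.add_apply]
  ring

lemma integrableOn_of_abs_le_gaussianEnvelope {F : ℝ → ℝ} {C : ℝ} (hm : m < 1)
    (hF : Continuous F) (hFC : ∀ x, |F x| ≤ C * gaussianEnvelope m x) (s : Set ℝ) :
    IntegrableOn F s :=
  ((integrable_gaussianEnvelope hm).integrableOn.const_mul C).mono' hF.aestronglyMeasurable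
    (ae_of_all _ hFC)

lemma integrable_prod_of_abs_le_gaussianEnvelope {F : ℝ × ℝ → ℝ} {C : ℝ} (hm : m < 1)
    (hF : Continuous F)
    (hFC : ∀ p, |F p| ≤ C * (gaussianEnvelope m p.1 * gaussianEnvelope m p.2)) (s t : Set ℝ) :
    Integrable F ((volume.restrict s).prod (volume.restrict t)) :=
  (((integrable_gaussianEnvelope hm).integrableOn.mul_prod
    (integrable_gaussianEnvelope hm).integrableOn).const_mul C).mono' hF.aestronglyMeasurable
    (ae_of_all _ hFC)

lemma integrableOn_fst_of_abs_le_gaussianEnvelope {F : ℝ → ℝ → ℝ} {C : ℝ} (hm : m < 1)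
    (hF : Continuous (Function.uncurry F))
    (hFC : ∀ u v, |F u v| ≤ C * (gaussianEnvelope m u * gaussianEnvelope m v)) (y : ℝ)
    (s : Set ℝ) : IntegrableOn (fun u => F u y) s :=
  integrableOn_of_abs_le_gaussianEnvelope (C := C * gaussianEnvelope m y) hm
    (hF.comp (continuous_id.prodMk continuous_const)) (fun u => (hFC u y).trans_eq (by ring)) s

lemma integrableOn_snd_of_abs_le_gaussianEnvelope {F : ℝ → ℝ → ℝ} {C : ℝ} (hm : m < 1)
    (hF : Continuous (Function.uncurry F))
    (hFC : ∀ u v, |F u v| ≤ C * (gaussianEnvelope m u * gaussianEnvelope m v)) (x : ℝ)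
    (s : Set ℝ) : IntegrableOn (F x) s :=
  integrableOn_of_abs_le_gaussianEnvelope (C := C * gaussianEnvelope m x) hm
    (hF.comp (continuous_const.prodMk continuous_id)) (fun v => (hFC x v).trans_eq (by ring)) s

lemma one_sub_mul_sq_add_sq_le (hρ : |ρ| ≤ m) (u v : ℝ) :
    (1 - m) * (u ^ 2 + v ^ 2) ≤ u ^ 2 - 2 * ρ * u * v + v ^ 2 := by
  obtain ⟨h₁, h₂⟩ := abs_le.mp hρ
  nlinarith [mul_nonneg (by linarith : 0 ≤ m - ρ) (sq_nonneg (u + v)),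
    mul_nonneg (by linarith : 0 ≤ m + ρ) (sq_nonneg (u - v))]

lemma bivPDF_le_exp_mul_exp (hm : m < 1) (hρ : |ρ| ≤ m) (u v : ℝ) :
    bivPDF ρ u v ≤
      (2 * π * √(1 - m ^ 2))⁻¹ * (exp (-((1 - m) / 2) * u ^ 2) * exp (-((1 - m) / 2) * v ^ 2)) := by
  have hm0 : 0 ≤ m := (abs_nonneg ρ).trans hρ
  have hρm : ρ ^ 2 ≤ m ^ 2 := sq_le_sq' (abs_le.1 hρ).1 (abs_le.1 hρ).2
  have hsm : 0 < 1 - m ^ 2 := by nlinarith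
  have hq := one_sub_mul_sq_add_sq_le hρ u v
  unfold bivPDF
  rw [← exp_add]
  gcongr
  have key : (1 - m) / 2 * (u ^ 2 + v ^ 2) ≤
      (u ^ 2 - 2 * ρ * u * v + v ^ 2) / (2 * (1 - ρ ^ 2)) :=
    calc (1 - m) / 2 * (u ^ 2 + v ^ 2) ≤ (u ^ 2 - 2 * ρ * u * v + v ^ 2) / 2 := by linarith
      _ ≤ _ := by
        gcongr
        · nlinarith [sq_nonneg u, sq_nonneg v]
        · nlinarith
        · nlinarith [sq_nonneg ρ]
  rw [neg_div]
  linarith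

lemma abs_bivPDF_mul_div_le (hm : m < 1) (hρ : |ρ| ≤ m) {N u v : ℝ}
    (hN : |N| ≤ (1 + 2 * u ^ 2) * (1 + 2 * v ^ 2)) (k : ℕ) :
    |bivPDF ρ u v * (N / (1 - ρ ^ 2) ^ k)| ≤
      (2 * π * √(1 - m ^ 2))⁻¹ / (1 - m ^ 2) ^ k *
        (gaussianEnvelope m u * gaussianEnvelope m v) := by
  have hm0 : 0 ≤ m := (abs_nonneg ρ).trans hρ
  have hρm : ρ ^ 2 ≤ m ^ 2 := sq_le_sq' (abs_le.1 hρ).1 (abs_le.1 hρ).2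
  have hsm : 0 < 1 - m ^ 2 := by nlinarith
  have hs : 0 < 1 - ρ ^ 2 := by linarith
  rw [abs_mul, abs_div, abs_pow, abs_of_pos hs, abs_of_pos (bivPDF_pos (by linarith [hρ]) u v)]
  calc bivPDF ρ u v * (|N| / (1 - ρ ^ 2) ^ k)
      ≤ (2 * π * √(1 - m ^ 2))⁻¹ * (exp (-((1 - m) / 2) * u ^ 2) * exp (-((1 - m) / 2) * v ^ 2)) *
          ((1 + 2 * u ^ 2) * (1 + 2 * v ^ 2) / (1 - m ^ 2) ^ k) := by
        gcongr
        exact bivPDF_le_exp_mul_exp hm hρ u v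
    _ = _ := by unfold gaussianEnvelope; ring

lemma abs_mul_sub_le_envelope_poly (hρ : |ρ| ≤ 1) (u v : ℝ) :
    |ρ * v - u| ≤ (1 + 2 * u ^ 2) * (1 + 2 * v ^ 2) := by
  have : |ρ * v - u| ≤ |u| + |v| := by
    calc |ρ * v - u| ≤ |ρ| * |v| + |u| := by rw [← abs_mul]; exact abs_sub _ _
      _ ≤ |u| + |v| := by nlinarith [abs_nonneg v]
  nlinarith [sq_abs u, sq_abs v, sq_nonneg (|u| - 1 / 2), sq_nonneg (|v| - 1 / 2),
    mul_nonneg (sq_nonneg u) (sq_nonneg v)]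

lemma abs_corr_numerator_le_envelope_poly (hρ : |ρ| ≤ 1) (u v : ℝ) :
    |(ρ * u - v) * (ρ * v - u) + ρ * (1 - ρ ^ 2)| ≤ (1 + 2 * u ^ 2) * (1 + 2 * v ^ 2) := by
  have h1 : |ρ * u - v| ≤ |u| + |v| := by
    calc |ρ * u - v| ≤ |ρ| * |u| + |v| := by rw [← abs_mul]; exact abs_sub _ _
      _ ≤ |u| + |v| := by nlinarith [abs_nonneg u]
  have h2 : |ρ * v - u| ≤ |u| + |v| := by
    calc |ρ * v - u| ≤ |ρ| * |v| + |u| := by rw [← abs_mul]; exact abs_sub _ _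
      _ ≤ |u| + |v| := by nlinarith [abs_nonneg v]
  have h3 : |ρ * (1 - ρ ^ 2)| ≤ 1 := by
    have : ρ ^ 2 ≤ 1 := by rwa [sq_le_one_iff_abs_le_one]
    rw [abs_mul, abs_of_nonneg (by linarith : 0 ≤ 1 - ρ ^ 2)]
    nlinarith [abs_nonneg ρ, sq_nonneg ρ]
  calc |(ρ * u - v) * (ρ * v - u) + ρ * (1 - ρ ^ 2)|
      ≤ |ρ * u - v| * |ρ * v - u| + |ρ * (1 - ρ ^ 2)| := by rw [← abs_mul]; exact abs_add_le _ _
    _ ≤ (|u| + |v|) * (|u| + |v|) + 1 := by gcongr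
    _ ≤ (1 + 2 * u ^ 2) * (1 + 2 * v ^ 2) := by
      nlinarith [sq_abs u, sq_abs v, sq_nonneg (|u| - |v|), mul_nonneg (sq_nonneg u) (sq_nonneg v)]

lemma abs_bivPDF_le (hm : m < 1) (hρ : |ρ| ≤ m) (u v : ℝ) :
    |bivPDF ρ u v| ≤ (2 * π * √(1 - m ^ 2))⁻¹ * (gaussianEnvelope m u * gaussianEnvelope m v) := by
  have hN : |(1 : ℝ)| ≤ (1 + 2 * u ^ 2) * (1 + 2 * v ^ 2) := by
    rw [abs_one]; nlinarith [sq_nonneg u, sq_nonneg v, mul_nonneg (sq_nonneg u) (sq_nonneg v)]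
  simpa using abs_bivPDF_mul_div_le hm hρ hN 0

lemma abs_bivPDFDerivFst_le (hm : m < 1) (hρ : |ρ| ≤ m) (u v : ℝ) :
    |bivPDFDerivFst ρ u v| ≤
      (2 * π * √(1 - m ^ 2))⁻¹ / (1 - m ^ 2) * (gaussianEnvelope m u * gaussianEnvelope m v) := by
  unfold bivPDFDerivFst
  simpa only [pow_one] using
    abs_bivPDF_mul_div_le hm hρ (abs_mul_sub_le_envelope_poly (hρ.trans hm.le) u v) 1

lemma abs_bivPDFDerivCorr_le (hm : m < 1) (hρ : |ρ| ≤ m) (u v : ℝ) :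
    |bivPDFDerivCorr ρ u v| ≤
      (2 * π * √(1 - m ^ 2))⁻¹ / (1 - m ^ 2) ^ 2 *
        (gaussianEnvelope m u * gaussianEnvelope m v) :=
  abs_bivPDF_mul_div_le hm hρ (abs_corr_numerator_le_envelope_poly (hρ.trans hm.le) u v) 2

lemma integral_Iic_bivPDFDerivCorr_snd (hρ : |ρ| < 1) (u y : ℝ) :
    ∫ v in Iic y, bivPDFDerivCorr ρ u v = bivPDFDerivFst ρ u y :=
  integral_Iic_eq_of_hasDerivAt_of_integrableOn (fun v _ => hasDerivAt_bivPDFDerivFst_snd u v)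
    (integrableOn_snd_of_abs_le_gaussianEnvelope hρ continuous_bivPDFDerivCorr
      (abs_bivPDFDerivCorr_le hρ le_rfl) u _)
    (integrableOn_snd_of_abs_le_gaussianEnvelope hρ continuous_bivPDFDerivFst
      (abs_bivPDFDerivFst_le hρ le_rfl) u _)

lemma integral_Iic_bivPDFDerivFst_fst (hρ : |ρ| < 1) (x y : ℝ) :
    ∫ u in Iic x, bivPDFDerivFst ρ u y = bivPDF ρ x y :=
  integral_Iic_eq_of_hasDerivAt_of_integrableOn (fun u _ => hasDerivAt_bivPDF_fst u y)
    (integrableOn_fst_of_abs_le_gaussianEnvelope hρ continuous_bivPDFDerivFst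
      (abs_bivPDFDerivFst_le hρ le_rfl) y _)
    (integrableOn_fst_of_abs_le_gaussianEnvelope hρ continuous_bivPDF
      (abs_bivPDF_le hρ le_rfl) y _)

lemma integral_bivPDFDerivCorr_prod (hρ : |ρ| < 1) (x y : ℝ) :
    ∫ p, Function.uncurry (bivPDFDerivCorr ρ) p
      ∂(volume.restrict (Iic x)).prod (volume.restrict (Iic y)) = bivPDF ρ x y := by
  rw [integral_prod _ (integrable_prod_of_abs_le_gaussianEnvelope hρ continuous_bivPDFDerivCorr
    (fun p => abs_bivPDFDerivCorr_le hρ le_rfl p.1 p.2) _ _)]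
  simp only [Function.uncurry_apply_pair, integral_Iic_bivPDFDerivCorr_snd hρ]
  exact integral_Iic_bivPDFDerivFst_fst hρ x y

lemma integrable_bivPDF_prod (hρ : |ρ| < 1) (x y : ℝ) :
    Integrable (Function.uncurry (bivPDF ρ))
      ((volume.restrict (Iic x)).prod (volume.restrict (Iic y))) :=
  integrable_prod_of_abs_le_gaussianEnvelope hρ continuous_bivPDF
    (fun p => abs_bivPDF_le hρ le_rfl p.1 p.2) _ _

lemma bivCDF_eq_integral_prod (hρ : |ρ| < 1) (x y : ℝ) :
    bivCDF ρ x y =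
      ∫ p, Function.uncurry (bivPDF ρ) p
        ∂(volume.restrict (Iic x)).prod (volume.restrict (Iic y)) :=
  integral_integral (integrable_bivPDF_prod hρ x y)

lemma continuousAt_bivPDFDerivCorr_corr (hρ : |ρ| < 1) (u v : ℝ) :
    ContinuousAt (fun r => bivPDFDerivCorr r u v) ρ := by
  have hs : (1 - ρ ^ 2) ^ 2 ≠ 0 := pow_ne_zero 2 (one_sub_sq_pos_of_abs_lt_one hρ).ne'
  exact (hasDerivAt_bivPDF_corr hρ u v).continuousAt.mul (by fun_prop (disch := exact hs))

lemma continuousOn_bivPDF_corr (x y : ℝ) : ContinuousOn (fun r => bivPDF r x y) (Ioo (-1) 1) :=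
  fun _ hr => (hasDerivAt_bivPDF_corr (abs_lt.2 hr) x y).continuousAt.continuousWithinAt

lemma integrable_bivPDFDerivCorr_prod_Ioc {a b : ℝ} (hm : m < 1)
    (habm : ∀ r ∈ Ioc a b, |r| ≤ m) (x y : ℝ) :
    Integrable (Function.uncurry fun (p : ℝ × ℝ) (r : ℝ) => bivPDFDerivCorr r p.1 p.2)
      (((volume.restrict (Iic x)).prod (volume.restrict (Iic y))).prod
        (volume.restrict (Ioc a b))) := by
  have hI := (integrable_gaussianEnvelope hm).integrableOn (s := Iic x)
  have hJ := (integrable_gaussianEnvelope hm).integrableOn (s := Iic y)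
  have hdom := ((hI.mul_prod hJ).const_mul ((2 * π * √(1 - m ^ 2))⁻¹ / (1 - m ^ 2) ^ 2)).mul_prod
    (integrableOn_const (μ := volume) (s := Ioc a b) (C := (1 : ℝ)) measure_Ioc_lt_top.ne)
  refine hdom.mono' ?_ ?_
  · apply Measurable.aestronglyMeasurable
    unfold Function.uncurry bivPDFDerivCorr bivPDF
    fun_prop
  · filter_upwards [Measure.quasiMeasurePreserving_snd.ae (ae_restrict_mem measurableSet_Ioc)]
      with q hq
    exact (abs_bivPDFDerivCorr_le hm (habm q.2 hq) _ _).trans_eq (by simp)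

theorem bivCDF_sub_bivCDF {a b : ℝ} (ha : -1 < a) (hab : a ≤ b) (hb : b < 1) (x y : ℝ) :
    bivCDF b x y - bivCDF a x y = ∫ r in a..b, bivPDF r x y := by
  have hm : max |a| |b| < 1 := max_lt (abs_lt.2 ⟨ha, by linarith⟩) (abs_lt.2 ⟨by linarith, hb⟩)
  have habm : ∀ r ∈ Icc a b, |r| ≤ max |a| |b| := fun r hr =>
    abs_le.2 ⟨by linarith [neg_abs_le a, le_max_left |a| |b|, hr.1],
      by linarith [le_abs_self b, le_max_right |a| |b|, hr.2]⟩
  have hlt : ∀ r ∈ Icc a b, |r| < 1 := fun r hr => (habm r hr).trans_lt hm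
  have hfib : ∀ p : ℝ × ℝ, Function.uncurry (bivPDF b) p - Function.uncurry (bivPDF a) p =
      ∫ r in Ioc a b, bivPDFDerivCorr r p.1 p.2 := by
    intro p
    rw [← intervalIntegral.integral_of_le hab, intervalIntegral.integral_eq_sub_of_hasDerivAt]
    · intro r hr
      rw [uIcc_of_le hab] at hr
      exact hasDerivAt_bivPDF_corr (hlt r hr) _ _
    · refine ContinuousOn.intervalIntegrable fun r hr => ?_
      rw [uIcc_of_le hab] at hr
      exact (continuousAt_bivPDFDerivCorr_corr (hlt r hr) _ _).continuousWithinAt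
  rw [bivCDF_eq_integral_prod (hlt b ⟨hab, le_rfl⟩), bivCDF_eq_integral_prod (hlt a ⟨le_rfl, hab⟩),
    ← integral_sub (integrable_bivPDF_prod (hlt b ⟨hab, le_rfl⟩) x y)
      (integrable_bivPDF_prod (hlt a ⟨le_rfl, hab⟩) x y)]
  simp_rw [hfib]
  rw [integral_integral_swap (integrable_bivPDFDerivCorr_prod_Ioc hm
    (fun r hr => habm r (Ioc_subset_Icc_self hr)) x y), intervalIntegral.integral_of_le hab]
  exact setIntegral_congr_fun measurableSet_Ioc fun r hr =>
    integral_bivPDFDerivCorr_prod (hlt r (Ioc_subset_Icc_self hr)) x y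

lemma bivPDF_diag (hρ : |ρ| < 1) (c : ℝ) :
    bivPDF ρ c c = (2 * π * √(1 - ρ ^ 2))⁻¹ * exp (-c ^ 2 / (1 + ρ)) := by
  obtain ⟨h₁, h₂⟩ := abs_lt.1 hρ
  have h₃ : 1 + ρ ≠ 0 := by linarith
  have h₄ : 1 - ρ ≠ 0 := by linarith
  unfold bivPDF
  congr 2
  rw [show 1 - ρ ^ 2 = (1 + ρ) * (1 - ρ) by ring]
  field_simp
  ring

lemma bivPDF_neg_diag_lt_diag {c : ℝ} (hc : c ≠ 0) (h₀ : 0 < ρ) (h₁ : ρ < 1) :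
    bivPDF (-ρ) c c < bivPDF ρ c c := by
  have hρ : |ρ| < 1 := abs_lt.2 ⟨by linarith, h₁⟩
  rw [bivPDF_diag (by rwa [abs_neg]) c, bivPDF_diag hρ c, neg_sq]
  have hs : 0 < √(1 - ρ ^ 2) := sqrt_pos.2 (one_sub_sq_pos_of_abs_lt_one hρ)
  refine mul_lt_mul_of_pos_left (exp_lt_exp.2 ?_) (by positivity)
  rw [neg_div, neg_div, neg_lt_neg_iff]
  exact div_lt_div_of_pos_left (by positivity) (by linarith) (by linarith)

theorem strictMonoOn_bivCDF_add_bivCDF_neg {c : ℝ} (hc : c ≠ 0) :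
    StrictMonoOn (fun ρ => bivCDF ρ c c + bivCDF (-ρ) c c) (Ioo 0 1) := by
  intro a ha b hb hab
  have hsub : uIcc a b ⊆ Ioo (-1) 1 := by
    rw [uIcc_of_le hab.le]
    exact Icc_subset_Ioo (by linarith [ha.1]) hb.2
  have hI₁ : IntervalIntegrable (fun r => bivPDF r c c) volume a b :=
    ((continuousOn_bivPDF_corr c c).mono hsub).intervalIntegrable
  have hI₂ : IntervalIntegrable (fun r => bivPDF (-r) c c) volume a b :=
    (((continuousOn_bivPDF_corr c c).comp continuousOn_neg fun r hr =>
      ⟨by linarith [hr.2], by linarith [hr.1]⟩).mono hsub).intervalIntegrable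
  have hdiff : (bivCDF b c c + bivCDF (-b) c c) - (bivCDF a c c + bivCDF (-a) c c) =
      ∫ r in a..b, (bivPDF r c c - bivPDF (-r) c c) := by
    rw [intervalIntegral.integral_sub hI₁ hI₂,
      intervalIntegral.integral_comp_neg (fun r => bivPDF r c c),
      ← bivCDF_sub_bivCDF (by linarith [ha.1]) hab.le hb.2,
      ← bivCDF_sub_bivCDF (by linarith [hb.2]) (by linarith) (by linarith [ha.1])]
    ring
  have hpos : 0 < ∫ r in a..b, (bivPDF r c c - bivPDF (-r) c c) :=
    intervalIntegral.intervalIntegral_pos_of_pos_on (hI₁.sub hI₂)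
      (fun r hr => sub_pos.2 (bivPDF_neg_diag_lt_diag hc (ha.1.trans hr.1) (hr.2.trans hb.2))) hab
  simp only
  linarith

end BivariateNormal

lemma stdCDF_zero : stdCDF 0 = 1 / 2 := by
  have hform : ∀ t : ℝ, -t ^ 2 / 2 = -(1 / 2) * t ^ 2 := fun t => by ring
  have hint : Integrable fun t : ℝ => exp (-t ^ 2 / 2) := by
    simpa only [hform] using integrable_exp_neg_mul_sq (by norm_num : (0 : ℝ) < 1 / 2)
  have hpos : 0 < √(2 * π) := sqrt_pos.2 (by positivity)
  unfold stdCDF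
  rw [integral_const_mul, integral_Iic_zero_of_even hint fun t => by rw [neg_sq],
    funext fun t => congrArg exp (hform t), integral_gaussian, show π / (1 / 2) = 2 * π by ring]
  field_simp

end

/-- For fixed `α ∈ (0,1)` and `c = c_{α/2}` the upper `α/2` standard normal
quantile, the joint rejection probability
`Q(ρ) = 4 − 8Φ(c) + 2Φ_ρ(c,c) + 2Φ_{−ρ}(c,c)` is strictly increasing on `(0, 1)`. -/
theorem statement4
    (α : ℝ) (hα : α ∈ Set.Ioo (0 : ℝ) 1)
    (c : ℝ) (hc : 2 * (1 - stdCDF c) = α)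
    (Q : ℝ → ℝ)
    (hQ : Q = fun ρ => 4 - 8 * stdCDF c + 2 * bivCDF ρ c c + 2 * bivCDF (-ρ) c c)
    (ρ₁ ρ₂ : ℝ) (h1 : 0 < ρ₁) (h12 : ρ₁ < ρ₂) (h2 : ρ₂ < 1) :
    Q ρ₁ < Q ρ₂ := by
  have hc0 : c ≠ 0 := by
    rintro rfl
    rw [stdCDF_zero] at hc
    linarith [hα.2]
  have hmono := strictMonoOn_bivCDF_add_bivCDF_neg hc0 ⟨h1, h12.trans h2⟩ ⟨h1.trans h12, h2⟩ h12
  subst hQ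
  dsimp only at hmono ⊢
  linarith
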